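/- Fix n ≥ 2 and consider the Algorithm 2 label dynamics. Suppose the initial configuration c₀ has exactly one agent labeled S, no agent labeled S', and no agent labeled R. Then in every configuration c reachable from c₀: exactly one agent has label in {S, S'}; if that agent has label S then no agent has label R; and if that agent has label S' then exactly one agent has label R. -/

import Mathlib

/-- Labels of Algorithm 2. -/
inductive Alg2.Label : Type
  | S | S' | R | u | ubar
deriving DecidableEq

/-- A configuration of the Algorithm 2 label dynamics. -/
abbrev Alg2.Config (n : ℕ) : Type := Fin n → Alg2.Label

open Alg2 in
/-- A single step of the Algorithm 2 label dynamics between a distinct initiator `i`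
and responder `j`: (S2), (S3), or a null interaction leaving the labels unchanged. -/
inductive Alg2.Step (n : ℕ) : Config n → Config n → Prop
  | s2 (c : Config n) (i j : Fin n) (hij : i ≠ j)
      (hi : c i = Label.S) (hj : c j = Label.u) :
      Step n c (Function.update (Function.update c i Label.S') j Label.R)
  | s3 (c : Config n) (i j : Fin n) (hij : i ≠ j)
      (hi : c i = Label.S') (hj : c j = Label.R) :
      Step n c (Function.update (Function.update c i Label.ubar) j Label.S)
  | null (c : Config n) : Step n c c

/-- Reachability: the reflexive–transitive closure of single steps. -/
def Alg2.Reachable (n : ℕ) : Alg2.Config n → Alg2.Config n → Prop :=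
  Relation.ReflTransGen (Alg2.Step n)

/-!
Both `#S + #S'` and `#R + #S` are conserved: (S2) turns an `S` into an `S'` and a `u` into
an `R`, while (S3) turns an `S'` into a `ū` and an `R` into an `S`. Initially both equal 1,
so `#S + #S' = 1` and `#R = #S'` in every reachable configuration.
-/

open Finset Function

theorem Finset.card_filter_update_add {ι α : Type*} [Fintype ι] [DecidableEq ι] [DecidableEq α]
    (f : ι → α) (i : ι) (b a : α) :
    #{k | update f i b k = a} + (if f i = a then 1 else 0) =
      #{k | f k = a} + (if b = a then 1 else 0) := by
  simp only [card_filter]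
  rw [sum_eq_add_sum_sdiff_singleton i (fun k => if f k = a then 1 else 0)
    fun h => (h (mem_univ i)).elim]
  simp only [apply_update (fun _ x => if x = a then 1 else 0),
    sum_update_of_mem (mem_univ i)]
  omega

namespace Alg2

variable {n : ℕ}

def count (c : Config n) (L : Label) : ℕ := #{i | c i = L}

theorem count_update_update (c : Config n) {i j : Fin n} (hij : i ≠ j) (a b L : Label) :
    count (update (update c i a) j b) L + (if c i = L then 1 else 0) +
        (if c j = L then 1 else 0) =
      count c L + (if a = L then 1 else 0) + (if b = L then 1 else 0) := by
  have hj := card_filter_update_add (update c i a) j b L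
  have hi := card_filter_update_add c i a L
  rw [update_of_ne hij.symm] at hj
  unfold count
  omega

theorem count_or (c : Config n) {L L' : Label} (h : L ≠ L') :
    #{i | c i = L ∨ c i = L'} = count c L + count c L' := by
  rw [filter_or, card_union_of_disjoint]
  · rfl
  · exact disjoint_filter.2 fun _ _ hL hL' => h (hL ▸ hL')

theorem Step.count_S_add_count_S' {c c' : Config n} (h : Step n c c') :
    count c' .S + count c' .S' = count c .S + count c .S' := by
  cases h with
  | s2 i j hij hi hj =>
    have hS := count_update_update c hij .S' .R .S
    have hS' := count_update_update c hij .S' .R .S'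
    simp only [hi, hj, reduceCtorEq, if_true, if_false] at hS hS'
    omega
  | s3 i j hij hi hj =>
    have hS := count_update_update c hij .ubar .S .S
    have hS' := count_update_update c hij .ubar .S .S'
    simp only [hi, hj, reduceCtorEq, if_true, if_false] at hS hS'
    omega
  | null => rfl

theorem Step.count_R_add_count_S {c c' : Config n} (h : Step n c c') :
    count c' .R + count c' .S = count c .R + count c .S := by
  cases h with
  | s2 i j hij hi hj =>
    have hR := count_update_update c hij .S' .R .R
    have hS := count_update_update c hij .S' .R .S
    simp only [hi, hj, reduceCtorEq, if_true, if_false] at hR hS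
    omega
  | s3 i j hij hi hj =>
    have hR := count_update_update c hij .ubar .S .R
    have hS := count_update_update c hij .ubar .S .S
    simp only [hi, hj, reduceCtorEq, if_true, if_false] at hR hS
    omega
  | null => rfl

theorem Reachable.apply_eq {β : Type*} (f : Config n → β)
    (hf : ∀ c c', Step n c c' → f c' = f c) {c c' : Config n} (h : Reachable n c c') :
    f c' = f c := by
  induction h with
  | refl => rfl
  | tail _ hstep ih => exact (hf _ _ hstep).trans ih

end Alg2

open Alg2 in
theorem stmt11_general (n : ℕ) (c₀ c : Config n)
    (hS : (Finset.univ.filter (fun i => c₀ i = Label.S)).card = 1)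
    (hS' : (Finset.univ.filter (fun i => c₀ i = Label.S')).card = 0)
    (hR : (Finset.univ.filter (fun i => c₀ i = Label.R)).card = 0)
    (hreach : Reachable n c₀ c) :
    (Finset.univ.filter (fun i => c i = Label.S ∨ c i = Label.S')).card = 1 ∧
    ((∃ i, c i = Label.S) → (Finset.univ.filter (fun i => c i = Label.R)).card = 0) ∧
    ((∃ i, c i = Label.S') → (Finset.univ.filter (fun i => c i = Label.R)).card = 1) := by
  change count c₀ .S = 1 at hS
  change count c₀ .S' = 0 at hS'
  change count c₀ .R = 0 at hR
  have hSS' : count c .S + count c .S' = 1 := by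
    rw [hreach.apply_eq _ fun _ _ h => h.count_S_add_count_S', hS, hS']
  have hRS : count c .R + count c .S = 1 := by
    rw [hreach.apply_eq _ fun _ _ h => h.count_R_add_count_S, hR, hS]
  have count_pos {L : Label} : (∃ i, c i = L) → 0 < count c L :=
    fun ⟨i, hi⟩ => card_pos.2 ⟨i, by simp [hi]⟩
  refine ⟨(count_or c (by decide)).trans hSS', fun h => ?_, fun h => ?_⟩
  · have := count_pos h
    change count c .R = 0
    omega
  · have := count_pos h
    change count c .R = 1
    omega

open Alg2 in
/-- If initially exactly one agent is labeled `S` and no agent is labeled `S'` or `R`,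
then in every reachable configuration exactly one agent has label in `{S, S'}`; when
that label is `S` there is no `R`-labeled agent, and when it is `S'` there is exactly
one `R`-labeled agent. -/
theorem stmt11 (n : ℕ) (hn : 2 ≤ n) (c₀ c : Config n)
    (hS : (Finset.univ.filter (fun i => c₀ i = Label.S)).card = 1)
    (hS' : (Finset.univ.filter (fun i => c₀ i = Label.S')).card = 0)
    (hR : (Finset.univ.filter (fun i => c₀ i = Label.R)).card = 0)
    (hreach : Reachable n c₀ c) :
    (Finset.univ.filter (fun i => c i = Label.S ∨ c i = Label.S')).card = 1 ∧
    ((∃ i, c i = Label.S) → (Finset.univ.filter (fun i => c i = Label.R)).card = 0) ∧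
    ((∃ i, c i = Label.S') → (Finset.univ.filter (fun i => c i = Label.R)).card = 1) :=
  stmt11_general n c₀ c hS hS' hR hreach
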